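/- The minimum of |z| over all complex roots z of the polynomial (q⁴ + 3q³ + 5q² + 3q + 1)(q⁶ + 2q⁵ + 3q⁴ + 5q³ + 3q² + 2q + 1)(q² − q + 1) equals (1 + √13 − √(2(√13 − 1)))/4; that is, this polynomial has a root of modulus (1 + √13 − √(2(√13 − 1)))/4 and every root has modulus at least this value. -/

import Mathlib

/-!
All three factors are reciprocal polynomials. The quartic splits over `ℝ` as
`(z² + p z + ρ²)(z² + P z + C)` with `ρ` the claimed radius, `C > ρ²`, and both quadratics of
negative discriminant, so its roots have modulus `ρ` or `√C`; the roots of `z² - z + 1` have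
modulus `1`. The sextic is `z³ g(z + z⁻¹)` with `g w = w³ + 2w² + 1`. If `t ≈ -2.2` is the real root
of `g`, then `z + z⁻¹ = t` has real roots, both at most `-3/5`, and the other roots `w` of `g`
satisfy `‖w‖² = t² + 2t < 1`, which `‖z + z⁻¹‖ ≥ ‖z‖⁻¹ - ‖z‖` rules out when `‖z‖ < 3/5`.
Since `ρ < 3/5`, the minimum is `ρ`.
-/

namespace Complex

variable {p c : ℝ} {z : ℂ}

theorem re_im_eq_zero_of_quadratic_root (h : z ^ 2 + p * z + c = 0) :
    z.re ^ 2 - z.im ^ 2 + p * z.re + c = 0 ∧ z.im * (2 * z.re + p) = 0 := by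
  have hre := congrArg re h
  have him := congrArg im h
  simp only [pow_two, add_re, add_im, mul_re, mul_im, ofReal_re, ofReal_im, zero_re, zero_im]
    at hre him
  exact ⟨by linear_combination hre, by linear_combination him⟩

theorem sq_norm_eq_of_quadratic_root (hd : p ^ 2 < 4 * c) (h : z ^ 2 + p * z + c = 0) :
    ‖z‖ ^ 2 = c := by
  obtain ⟨hre, him⟩ := re_im_eq_zero_of_quadratic_root h
  have hx : 2 * z.re + p = 0 := by
    refine (mul_eq_zero.mp him).resolve_left fun hy => ?_
    rw [hy] at hre
    nlinarith [sq_nonneg (2 * z.re + p)]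
  rw [Complex.sq_norm, normSq_apply]
  linear_combination z.re * hx - hre

theorem im_eq_zero_of_quadratic_root (hd : 4 * c < p ^ 2) (h : z ^ 2 + p * z + c = 0) :
    z.im = 0 := by
  obtain ⟨hre, him⟩ := re_im_eq_zero_of_quadratic_root h
  refine (mul_eq_zero.mp him).resolve_right fun hx => ?_
  nlinarith [sq_nonneg z.im]

theorem le_norm_of_quadratic_root {r : ℝ} (hd : p ^ 2 < 4 * c) (hr : 0 ≤ r) (hrc : r ^ 2 ≤ c)
    (h : z ^ 2 + p * z + c = 0) : r ≤ ‖z‖ :=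
  (pow_le_pow_iff_left₀ hr (norm_nonneg z) two_ne_zero).mp
    (hrc.trans_eq (sq_norm_eq_of_quadratic_root hd h).symm)

theorem exists_quadratic_root (p c : ℂ) : ∃ z : ℂ, z ^ 2 + p * z + c = 0 := by
  obtain ⟨z, hz⟩ := exists_quadratic_eq_zero (one_ne_zero : (1 : ℂ) ≠ 0) (b := p) (c := c)
    (IsAlgClosed.exists_eq_mul_self _)
  exact ⟨z, by linear_combination hz⟩

end Complex

theorem norm_inv_sub_norm_le_norm_add_inv {𝕜 : Type*} [NormedDivisionRing 𝕜] (z : 𝕜) :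
    ‖z‖⁻¹ - ‖z‖ ≤ ‖z + z⁻¹‖ := by
  simpa [norm_inv, add_comm] using norm_sub_norm_le z⁻¹ (-z)

theorem sextic_eq_pow_three_mul {K : Type*} [Field K] {z : K} (hz : z ≠ 0) :
    z ^ 6 + 2 * z ^ 5 + 3 * z ^ 4 + 5 * z ^ 3 + 3 * z ^ 2 + 2 * z + 1 =
      z ^ 3 * ((z + z⁻¹) ^ 3 + 2 * (z + z⁻¹) ^ 2 + 1) := by
  field_simp
  ring

theorem exists_cubic_root_mem_Icc :
    ∃ t ∈ Set.Icc (-9 / 4 : ℝ) (-11 / 5), t ^ 3 + 2 * t ^ 2 + 1 = 0 :=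
  intermediate_value_Icc (by norm_num)
    (by fun_prop : Continuous fun t : ℝ => t ^ 3 + 2 * t ^ 2 + 1).continuousOn (by norm_num)

theorem three_fifths_le_norm_of_add_inv_eq {t : ℝ} (ht_ge : -9 / 4 ≤ t) (ht_lt : t < -2)
    {z : ℂ} (h : z + z⁻¹ = t) : 3 / 5 ≤ ‖z‖ := by
  have hz : z ≠ 0 := by
    rintro rfl
    have : t = 0 := by simpa [eq_comm] using h
    linarith
  have hq : z ^ 2 + ((-t : ℝ) : ℂ) * z + ((1 : ℝ) : ℂ) = 0 := by
    push_cast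
    rw [← h]
    field_simp
    ring
  have him : z.im = 0 := Complex.im_eq_zero_of_quadratic_root (by nlinarith) hq
  have hre := (Complex.re_im_eq_zero_of_quadratic_root hq).1
  rw [him] at hre
  have hx : z.re < 0 := by nlinarith
  calc 3 / 5 ≤ -z.re := by nlinarith
    _ = |z.re| := (abs_of_neg hx).symm
    _ ≤ ‖z‖ := Complex.abs_re_le_norm z

theorem three_fifths_le_norm_of_norm_add_inv_le {𝕜 : Type*} [NormedDivisionRing 𝕜] {z : 𝕜}
    (hz : z ≠ 0) (h : ‖z + z⁻¹‖ ≤ 16 / 15) :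
    3 / 5 ≤ ‖z‖ := by
  by_contra! hlt
  have hinv : 5 / 3 < ‖z‖⁻¹ := by
    rw [lt_inv_comm₀ (by norm_num) (norm_pos_iff.mpr hz)]
    linarith
  linarith [norm_inv_sub_norm_le_norm_add_inv z]

theorem three_fifths_le_norm_of_sextic_root {z : ℂ}
    (h : z ^ 6 + 2 * z ^ 5 + 3 * z ^ 4 + 5 * z ^ 3 + 3 * z ^ 2 + 2 * z + 1 = 0) :
    3 / 5 ≤ ‖z‖ := by
  obtain ⟨t, ⟨ht_ge, ht_le⟩, ht⟩ := exists_cubic_root_mem_Icc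
  have hz : z ≠ 0 := by rintro rfl; norm_num at h
  set w := z + z⁻¹
  have hw : (w - t) * (w ^ 2 + ((2 + t : ℝ) : ℂ) * w + ((t ^ 2 + 2 * t : ℝ) : ℂ)) = 0 := by
    have htC : (t : ℂ) ^ 3 + 2 * t ^ 2 + 1 = 0 := by exact_mod_cast ht
    rw [sextic_eq_pow_three_mul hz] at h
    push_cast
    linear_combination (mul_eq_zero.mp h).resolve_left (pow_ne_zero 3 hz) - htC
  rcases mul_eq_zero.mp hw with hwt | hw_quad
  · exact three_fifths_le_norm_of_add_inv_eq ht_ge (by linarith) (sub_eq_zero.mp hwt)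
  · have hw_sq : ‖w‖ ^ 2 = t ^ 2 + 2 * t :=
      Complex.sq_norm_eq_of_quadratic_root (by nlinarith) hw_quad
    exact three_fifths_le_norm_of_norm_add_inv_le hz (by nlinarith [norm_nonneg w])

/-- With `s = √13` and `u = √(2(s - 1))`: the second factor is the reciprocal of the first, whose
constant term `c` solves `c + c⁻¹ = (3 + s) / 2`. -/
theorem quartic_eq_mul_of_sq_eq {s u : ℝ} (hs : s ^ 2 = 13) (hu : u ^ 2 = 2 * (s - 1)) (z : ℂ) :
    z ^ 4 + 3 * z ^ 3 + 5 * z ^ 2 + 3 * z + 1 =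
      (z ^ 2 + ((12 - (s - 1) * u) / 8 : ℝ) * z + (((1 + s - u) / 4) ^ 2 : ℝ)) *
        (z ^ 2 + ((12 + (s - 1) * u) / 8 : ℝ) * z + ((6 + 2 * s + u + s * u) / 8 : ℝ)) := by
  have hsC : (s : ℂ) ^ 2 = 13 := by exact_mod_cast hs
  have huC : (u : ℂ) ^ 2 = 2 * (s - 1) := by exact_mod_cast hu
  push_cast
  linear_combination
    ((u : ℂ) ^ 2 / 64 + z * u ^ 2 / 32 - z ^ 2 / 16 + z ^ 2 * u ^ 2 / 64
      - (z ^ 2 + (12 + (s - 1) * u) / 8 * z + (6 + 2 * s + u + s * u) / 8) / 16) * hsC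
    + (7 / 32 + (s : ℂ) / 32 + 3 * z / 8 + 7 * z ^ 2 / 32 - z ^ 2 * s / 32
      - (z ^ 2 + (12 + (s - 1) * u) / 8 * z + (6 + 2 * s + u + s * u) / 8) / 16) * huC

noncomputable def bronzeRadius : ℝ := (1 + √13 - √(2 * (√13 - 1))) / 4

theorem sqrt_thirteen_mem_Ioo : √13 ∈ Set.Ioo 3.6 3.61 :=
  ⟨(Real.lt_sqrt (by norm_num)).mpr (by norm_num), (Real.sqrt_lt' (by norm_num)).mpr (by norm_num)⟩

theorem sqrt_two_mul_sqrt_thirteen_sub_one_mem_Ioo : √(2 * (√13 - 1)) ∈ Set.Ioo 2.28 2.29 := by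
  obtain ⟨hs_lo, hs_hi⟩ := sqrt_thirteen_mem_Ioo
  exact ⟨(Real.lt_sqrt (by norm_num)).mpr (by linarith),
    (Real.sqrt_lt' (by norm_num)).mpr (by linarith)⟩

theorem bronzeRadius_pos : 0 < bronzeRadius := by
  have := sqrt_thirteen_mem_Ioo.1
  have := sqrt_two_mul_sqrt_thirteen_sub_one_mem_Ioo.2
  unfold bronzeRadius
  linarith

theorem bronzeRadius_lt_three_fifths : bronzeRadius < 3 / 5 := by
  have := sqrt_thirteen_mem_Ioo.2
  have := sqrt_two_mul_sqrt_thirteen_sub_one_mem_Ioo.1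
  unfold bronzeRadius
  linarith

theorem exists_quartic_eq_mul :
    ∃ p P C : ℝ, p ^ 2 < 4 * bronzeRadius ^ 2 ∧ P ^ 2 < 4 * C ∧ bronzeRadius ^ 2 ≤ C ∧
      ∀ z : ℂ, z ^ 4 + 3 * z ^ 3 + 5 * z ^ 2 + 3 * z + 1 =
        (z ^ 2 + p * z + (bronzeRadius ^ 2 : ℝ)) * (z ^ 2 + P * z + C) := by
  obtain ⟨hs_lo, hs_hi⟩ := sqrt_thirteen_mem_Ioo
  obtain ⟨hu_lo, hu_hi⟩ := sqrt_two_mul_sqrt_thirteen_sub_one_mem_Ioo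
  set s := √13
  set u := √(2 * (s - 1))
  have hs : s ^ 2 = 13 := Real.sq_sqrt (by norm_num)
  have hu : u ^ 2 = 2 * (s - 1) := Real.sq_sqrt (by linarith)
  have hsu_lo : 2.6 * 2.28 < (s - 1) * u := by nlinarith
  have hsu_hi : (s - 1) * u < 2.61 * 2.29 := by nlinarith
  rw [show bronzeRadius = (1 + s - u) / 4 from rfl]
  refine ⟨_, _, _, ?_, ?_, ?_, quartic_eq_mul_of_sq_eq hs hu⟩ <;> nlinarith

theorem bronze_ratio_min_root_modulus :
    (∃ z : ℂ,
      (z ^ 4 + 3 * z ^ 3 + 5 * z ^ 2 + 3 * z + 1) *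
        (z ^ 6 + 2 * z ^ 5 + 3 * z ^ 4 + 5 * z ^ 3 + 3 * z ^ 2 + 2 * z + 1) *
        (z ^ 2 - z + 1) = 0 ∧
      ‖z‖ = (1 + Real.sqrt 13 - Real.sqrt (2 * (Real.sqrt 13 - 1))) / 4) ∧
    ∀ z : ℂ,
      (z ^ 4 + 3 * z ^ 3 + 5 * z ^ 2 + 3 * z + 1) *
        (z ^ 6 + 2 * z ^ 5 + 3 * z ^ 4 + 5 * z ^ 3 + 3 * z ^ 2 + 2 * z + 1) *
        (z ^ 2 - z + 1) = 0 →
      (1 + Real.sqrt 13 - Real.sqrt (2 * (Real.sqrt 13 - 1))) / 4 ≤ ‖z‖ := by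
  obtain ⟨p, P, C, hp, hP, hC, hfac⟩ := exists_quartic_eq_mul
  have hρ₀ := bronzeRadius_pos.le
  have hρ := bronzeRadius_lt_three_fifths
  refine ⟨?_, fun z hz => ?_⟩
  · obtain ⟨z, hz⟩ := Complex.exists_quadratic_root p (bronzeRadius ^ 2 : ℝ)
    refine ⟨z, by rw [hfac, hz]; ring, ?_⟩
    exact (pow_left_inj₀ (norm_nonneg z) hρ₀ two_ne_zero).mp
      (Complex.sq_norm_eq_of_quadratic_root hp hz)
  obtain (h4 | h6) | h2 := mul_eq_zero.mp hz |>.imp_left mul_eq_zero.mp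
  · rcases mul_eq_zero.mp ((hfac z).symm.trans h4) with h | h
    · exact Complex.le_norm_of_quadratic_root hp hρ₀ le_rfl h
    · exact Complex.le_norm_of_quadratic_root hP hρ₀ hC h
  · exact hρ.le.trans (three_fifths_le_norm_of_sextic_root h6)
  · exact Complex.le_norm_of_quadratic_root (p := -1) (c := 1) (r := bronzeRadius) (by norm_num)
      hρ₀ (by nlinarith) (by push_cast; linear_combination h2)
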